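/- Let S be a monoid, regarded as a right S-act over itself via its multiplication. Then S is a cancellable S-act: for all S-acts B and C, S ⊔ B ≅ S ⊔ C implies B ≅ C. -/

import Mathlib

/-!
An isomorphism `e : S ⊔ B ≅ S ⊔ C` is determined on the summand `S` by `e(1)`, since `S` is
generated by `1`. If `e(1) = u ∈ S`, then `e⁻¹(1) · u = 1`, so `e⁻¹(1) ∈ S` as well; by symmetry
`e(1) ∈ S ↔ e⁻¹(1) ∈ S`. Hence either `e` maps `S` onto `S`, or `e` maps `S` into `C` and `e⁻¹`
maps `S` into `B`. In both cases the `e`-orbit of any `b ∈ B` reaches `C` within two steps, and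
sending `b` to that first point of `C` is an isomorphism `B ≅ C`, with inverse given by `e⁻¹`.
-/

universe u v w

/-- A right `S`-act structure on a type `A`: a map `A × S → A`, `(a, s) ↦ a · s`,
with `a · 1 = a` and `a · (s*t) = (a · s) · t`. (`S`-acts are additionally required
to be nonempty; this is imposed via `Nonempty` hypotheses.) -/
class RAct (S : Type u) [Monoid S] (A : Type v) : Type (max u v) where
  act : A → S → A
  act_one : ∀ a : A, act a 1 = a
  act_mul : ∀ (a : A) (s t : S), act a (s * t) = act (act a s) t

/-- Isomorphism of `S`-acts: a bijective action-preserving map. -/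
def ActIso (S : Type u) [Monoid S] (A : Type v) (B : Type w) [RAct S A] [RAct S B] : Prop :=
  ∃ e : A ≃ B, ∀ (a : A) (s : S), e (RAct.act a s) = RAct.act (e a) s

/-- The coproduct (disjoint union) of two `S`-acts, with componentwise action. -/
instance sumRAct (S : Type u) [Monoid S] (A : Type v) (B : Type w) [RAct S A] [RAct S B] :
    RAct S (A ⊕ B) where
  act x s := Sum.map (fun a => RAct.act a s) (fun b => RAct.act b s) x
  act_one := by rintro (a | b) <;> simp [RAct.act_one]
  act_mul := by rintro (a | b) s t <;> simp [RAct.act_mul]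

/-- An `S`-act `A` is cancellable if `A ⊔ B ≅ A ⊔ C` implies `B ≅ C`
for all `S`-acts `B`, `C`. -/
def Cancellable (S : Type u) [Monoid S] (A : Type u) [RAct S A] : Prop :=
  ∀ (B C : Type u) [RAct S B] [RAct S C] [Nonempty B] [Nonempty C],
    ActIso S (A ⊕ B) (A ⊕ C) → ActIso S B C

/-- The monoid `S` as a right `S`-act over itself via its multiplication. -/
instance selfRAct (S : Type u) [Monoid S] : RAct S S where
  act a s := a * s
  act_one := mul_one
  act_mul a s t := (mul_assoc a s t).symm

open Sum

def IsActHom (S : Type*) [Monoid S] {A B : Type*} [RAct S A] [RAct S B] (f : A → B) : Prop :=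
  ∀ (a : A) (s : S), f (RAct.act a s) = RAct.act (f a) s

section Acts

variable {S : Type*} [Monoid S] {A B : Type*} [RAct S A] [RAct S B]

theorem IsActHom.symm {e : A ≃ B} (he : IsActHom S e) : IsActHom S e.symm := fun b s =>
  e.injective (by rw [he, Equiv.apply_symm_apply, Equiv.apply_symm_apply])

theorem actIso_of_existsUnique (R : A → B → Prop) (hR : ∀ a, ∃! b, R a b)
    (hR' : ∀ b, ∃! a, R a b) (hact : ∀ a b (s : S), R a b → R (RAct.act a s) (RAct.act b s)) :
    ActIso S A B := by
  choose f hf using fun a => (hR a).exists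
  have hinj : f.Injective := fun a a' h => (hR' (f a')).unique (h ▸ hf a) (hf a')
  have hsurj : f.Surjective := fun b => (hR' b).exists.imp fun a ha => (hR a).unique (hf a) ha
  exact ⟨.ofBijective f ⟨hinj, hsurj⟩, fun a s => (hR _).unique (hf _) (hact _ _ s (hf a))⟩

@[simp]
theorem RAct.act_inl (a : A) (s : S) : RAct.act (inl a : A ⊕ B) s = inl (RAct.act a s) := rfl

@[simp]
theorem RAct.act_inr (b : B) (s : S) : RAct.act (inr b : A ⊕ B) s = inr (RAct.act b s) := rfl

@[simp]
theorem Sum.isLeft_act (z : A ⊕ B) (s : S) : (RAct.act z s).isLeft = z.isLeft := by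
  cases z <;> rfl

end Acts

section HitsInTwoSteps

variable {X B C : Type*}

def HitsInTwoSteps (e : X ⊕ B ≃ X ⊕ C) (b : B) (c : C) : Prop :=
  e (inr b) = inr c ∨ ∃ x, e (inr b) = inl x ∧ e (inl x) = inr c

theorem hitsInTwoSteps_symm_iff {e : X ⊕ B ≃ X ⊕ C} {b : B} {c : C} :
    HitsInTwoSteps e.symm c b ↔ HitsInTwoSteps e b c := by
  simp only [HitsInTwoSteps, Equiv.symm_apply_eq]
  grind

theorem HitsInTwoSteps.unique {e : X ⊕ B ≃ X ⊕ C} {b : B} {c c' : C}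
    (h : HitsInTwoSteps e b c) (h' : HitsInTwoSteps e b c') : c = c' := by
  rcases h with h | ⟨x, hx, h⟩ <;> rcases h' with h' | ⟨x', hx', h'⟩ <;> simp_all

theorem HitsInTwoSteps.act {S : Type*} [Monoid S] [RAct S X] [RAct S B] [RAct S C]
    {e : X ⊕ B ≃ X ⊕ C} (he : IsActHom S e) {b : B} {c : C} (h : HitsInTwoSteps e b c) (s : S) :
    HitsInTwoSteps e (RAct.act b s) (RAct.act c s) := by
  rcases h with h | ⟨x, hx, h⟩
  · left
    rw [← RAct.act_inr, he, h, RAct.act_inr]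
  · right
    refine ⟨RAct.act x s, ?_, ?_⟩
    · rw [← RAct.act_inr, he, hx, RAct.act_inl]
    · rw [← RAct.act_inl, he, h, RAct.act_inr]

end HitsInTwoSteps

section Monoid

variable {S : Type*} [Monoid S] {B C : Type*} [RAct S B] [RAct S C]

@[simp]
theorem RAct.act_self (a s : S) : RAct.act (self := selfRAct S) a s = a * s := rfl

theorem IsActHom.apply_inl {Y : Type*} [RAct S Y] {f : S ⊕ B → Y} (hf : IsActHom S f) (x : S) :
    f (inl x) = RAct.act (f (inl 1)) x := by
  rw [← hf, RAct.act_inl, RAct.act_self, one_mul]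

theorem IsActHom.isLeft_symm_apply_inl_one {e : S ⊕ B ≃ S ⊕ C} (he : IsActHom S e)
    (h : (e (inl 1)).isLeft) : (e.symm (inl 1)).isLeft := by
  obtain ⟨u, hu⟩ := isLeft_iff.mp h
  have hsymm : RAct.act (e.symm (inl 1)) u = inl 1 :=
    e.injective (by rw [he, Equiv.apply_symm_apply, hu, RAct.act_inl, RAct.act_self, one_mul])
  rw [← Sum.isLeft_act _ u, hsymm, isLeft_inl]

theorem IsActHom.exists_hitsInTwoSteps {e : S ⊕ B ≃ S ⊕ C} (he : IsActHom S e) (b : B) :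
    ∃ c, HitsInTwoSteps e b c := by
  rcases hb : e (inr b) with x | c
  · have hx : e.symm (inl x) = inr b := by rw [← hb, Equiv.symm_apply_apply]
    have hsymm : (e.symm (inl 1)).isLeft = false := by
      rw [← Sum.isLeft_act _ x, ← he.symm.apply_inl, hx, isLeft_inr]
    have hright : (e (inl x)).isRight := by
      rw [← not_isLeft, he.apply_inl, Sum.isLeft_act]
      exact mt he.isLeft_symm_apply_inl_one (by simp [hsymm])
    obtain ⟨c, hc⟩ := isRight_iff.mp hright
    exact ⟨c, .inr ⟨x, hb, hc⟩⟩
  · exact ⟨c, .inl hb⟩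

theorem IsActHom.existsUnique_hitsInTwoSteps {e : S ⊕ B ≃ S ⊕ C} (he : IsActHom S e) (b : B) :
    ∃! c, HitsInTwoSteps e b c :=
  existsUnique_of_exists_of_unique (he.exists_hitsInTwoSteps b) fun _ _ => HitsInTwoSteps.unique

end Monoid

theorem monoid_cancellable_general (S : Type u) [Monoid S]
    (B C : Type u) [RAct S B] [RAct S C]
    (h : ActIso S (S ⊕ B) (S ⊕ C)) : ActIso S B C := by
  obtain ⟨e, he : IsActHom S e⟩ := h
  refine actIso_of_existsUnique (HitsInTwoSteps e) he.existsUnique_hitsInTwoSteps (fun c => ?_)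
    (fun _ _ s h => h.act he s)
  simpa only [hitsInTwoSteps_symm_iff] using he.symm.existsUnique_hitsInTwoSteps c

/-- The monoid `S`, as a right `S`-act over itself, is cancellable. -/
theorem monoid_cancellable (S : Type u) [Monoid S]
    (B C : Type u) [RAct S B] [RAct S C] [Nonempty B] [Nonempty C]
    (h : ActIso S (S ⊕ B) (S ⊕ C)) : ActIso S B C :=
  monoid_cancellable_general S B C h
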